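/- Let g : Γ → Γ be an expanding train track map, g = g'' ∘ g' with g', g'' surjective tight graph maps, and f = g' ∘ g''. If there is an edge e of Γ with |g^n(e)| → ∞ as n → ∞, then there is an edge e' of Γ' with |f^n(e')| → ∞ as n → ∞; i.e., f is expanding on some edge. -/
import Mathlib


/-! Combinatorial model of graph maps: a directed edge of a graph with (positively
oriented) edge set `α` is a pair `(a, b) : α × Bool`; an edge path is a list of directed
edges; a graph map sends each directed edge to a nonempty edge path, compatibly with
orientation reversal. Tightness of a path is reducedness, i.e. invariance under
`FreeGroup.reduce`. -/

/-- Orientation reversal of a directed edge. -/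
def bar {α : Type*} (e : α × Bool) : α × Bool := (e.1, !e.2)

/-- The inverse of an edge path. -/
def wordInv {α : Type*} (w : List (α × Bool)) : List (α × Bool) := (w.map bar).reverse

/-- Extension of an edge map to edge paths. -/
def mapWord {α β : Type*} (φ : α × Bool → List (β × Bool)) (w : List (α × Bool)) :
    List (β × Bool) := w.flatMap φ

/-- `φ` is a graph map: compatible with orientation reversal, edges go to nonempty paths. -/
def IsGraphMap {α β : Type*} (φ : α × Bool → List (β × Bool)) : Prop :=
  (∀ e, φ (bar e) = wordInv (φ e)) ∧ ∀ e, φ e ≠ []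

/-- `φ` is tight: the image of each edge is a reduced (tight) edge path. -/
def TightMap {α β : Type*} [DecidableEq β] (φ : α × Bool → List (β × Bool)) : Prop :=
  ∀ e, FreeGroup.reduce (φ e) = φ e

/-- `φ` is surjective: each edge of the target is crossed (in some orientation) by the
image of some edge. -/
def SurjMap {α β : Type*} (φ : α × Bool → List (β × Bool)) : Prop :=
  ∀ e', ∃ e, e' ∈ φ e ∨ bar e' ∈ φ e


lemma mapWord_append {α β : Type*} (φ : α × Bool → List (β × Bool)) (a b : List (α × Bool)) :
    mapWord φ (a ++ b) = mapWord φ a ++ mapWord φ b := by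
  simp [mapWord]

lemma mapWord_cons {α β : Type*} (φ : α × Bool → List (β × Bool)) (e w) :
    mapWord φ (e :: w) = φ e ++ mapWord φ w := by simp [mapWord]

lemma mapWord_singleton {α β : Type*} (φ : α × Bool → List (β × Bool)) (e) :
    mapWord φ [e] = φ e := by simp [mapWord]

lemma mapWord_comp {α β γ : Type*} (φ : α × Bool → List (β × Bool))
    (ψ : β × Bool → List (γ × Bool)) (w : List (α × Bool)) :
    mapWord ψ (mapWord φ w) = mapWord (fun e => mapWord ψ (φ e)) w := by
  induction w with
  | nil => simp [mapWord]
  | cons e w ih => simp [mapWord_cons, mapWord_append, ih]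

lemma length_le_mapWord {α β : Type*} (φ : α × Bool → List (β × Bool))
    (hφ : ∀ e, φ e ≠ []) (w : List (α × Bool)) : w.length ≤ (mapWord φ w).length := by
  induction w with
  | nil => simp [mapWord]
  | cons e w ih =>
    have : 1 ≤ (φ e).length := List.length_pos_iff.mpr (hφ e)
    simp only [mapWord_cons, List.length_append, List.length_cons]
    omega

lemma wordInv_append {α : Type*} (a b : List (α × Bool)) :
    wordInv (a ++ b) = wordInv b ++ wordInv a := by simp [wordInv]

lemma mapWord_wordInv {α β : Type*} (φ : α × Bool → List (β × Bool))
    (hφ : ∀ e, φ (bar e) = wordInv (φ e)) (w : List (α × Bool)) :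
    mapWord φ (wordInv w) = wordInv (mapWord φ w) := by
  induction w with
  | nil => simp [mapWord, wordInv]
  | cons e w ih =>
    have h1 : wordInv (e :: w) = wordInv w ++ [bar e] := by simp [wordInv]
    rw [h1, mapWord_append, ih, mapWord_singleton, hφ, mapWord_cons, wordInv_append]

/-- if `g = g'' ∘ g'` is an expanding train track map through surjective
tight graph maps and some edge `e` of `Γ` has `|g^n(e)| → ∞`, then some edge `e'` of `Γ'`
has `|f^n(e')| → ∞` for `f = g' ∘ g''`. -/
theorem stmt6 {α β : Type*} [DecidableEq α] [DecidableEq β]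
    (g' : α × Bool → List (β × Bool)) (g'' : β × Bool → List (α × Bool))
    (hg'gm : IsGraphMap g') (hg''gm : IsGraphMap g'')
    (hg't : TightMap g') (hg''t : TightMap g'')
    (hg's : SurjMap g') (hg''s : SurjMap g'')
    (g : α × Bool → List (α × Bool)) (hg : g = fun e => mapWord g'' (g' e))
    (f : β × Bool → List (β × Bool)) (hf : f = fun e => mapWord g' (g'' e))
    (htt : ∀ k, ∀ e : α × Bool,
      FreeGroup.reduce ((mapWord g)^[k] [e]) = (mapWord g)^[k] [e])
    (hexp : ∃ e : α × Bool,
      Filter.Tendsto (fun n => ((mapWord g)^[n] [e]).length) Filter.atTop Filter.atTop) :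
    ∃ e' : β × Bool,
      Filter.Tendsto (fun n => ((mapWord f)^[n] [e']).length) Filter.atTop Filter.atTop := by
  obtain ⟨e, he⟩ := hexp
  have hgbar : ∀ x, g (bar x) = wordInv (g x) := by
    intro x
    rw [hg]
    simp only
    rw [hg'gm.1 x, mapWord_wordInv g'' hg''gm.1]
  have hiterInv : ∀ n (w : List (α × Bool)),
      (mapWord g)^[n] (wordInv w) = wordInv ((mapWord g)^[n] w) := by
    intro n
    induction n with
    | zero => simp
    | succ n ih =>
      intro w
      rw [Function.iterate_succ_apply, Function.iterate_succ_apply,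
        mapWord_wordInv g hgbar, ih]
  have hwlen : ∀ (w : List (α × Bool)), (wordInv w).length = w.length := by
    intro w; simp [wordInv]
  obtain ⟨e', he'⟩ := hg''s e
  have key : ∃ eb, eb ∈ g'' e' ∧
      ∀ n, ((mapWord g)^[n] [e]).length ≤ ((mapWord g)^[n] [eb]).length := by
    rcases he' with h | h
    · exact ⟨e, h, fun n => le_refl _⟩
    · refine ⟨bar e, h, fun n => ?_⟩
      have h0 : ([bar e] : List (α × Bool)) = wordInv [e] := by simp [wordInv]
      rw [h0, hiterInv, hwlen]
  obtain ⟨eb, hmem, hle⟩ := key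
  have h1 : ∀ u : List (β × Bool), mapWord f u = mapWord g' (mapWord g'' u) := by
    intro u; rw [hf, ← mapWord_comp]
  have h2 : ∀ u : List (α × Bool), mapWord g u = mapWord g'' (mapWord g' u) := by
    intro u; rw [hg, ← mapWord_comp]
  have comm : ∀ n (w : List (α × Bool)),
      (mapWord f)^[n] (mapWord g' w) = mapWord g' ((mapWord g)^[n] w) := by
    intro n
    induction n with
    | zero => simp
    | succ n ih =>
      intro w
      rw [Function.iterate_succ_apply, Function.iterate_succ_apply, h1, ← h2, ih]
  have itapp : ∀ n (a b : List (α × Bool)),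
      (mapWord g)^[n] (a ++ b) = (mapWord g)^[n] a ++ (mapWord g)^[n] b := by
    intro n
    induction n with
    | zero => simp
    | succ n ih =>
      intro a b
      simp only [Function.iterate_succ_apply]
      rw [mapWord_append, ih]
  have main : ∀ n, ((mapWord g)^[n] [eb]).length ≤ ((mapWord f)^[n + 1] [e']).length := by
    intro n
    have hfe' : (mapWord f)^[n + 1] [e'] = mapWord g' ((mapWord g)^[n] (g'' e')) := by
      rw [Function.iterate_succ_apply, mapWord_singleton]
      have hfe : f e' = mapWord g' (g'' e') := by rw [hf]
      rw [hfe]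
      exact comm n (g'' e')
    obtain ⟨s, t, hst⟩ := List.append_of_mem hmem
    have hst' : g'' e' = s ++ [eb] ++ t := by rw [hst]; simp
    rw [hfe', hst', itapp, itapp, mapWord_append, mapWord_append]
    have hmid : ((mapWord g)^[n] [eb]).length ≤
        (mapWord g' ((mapWord g)^[n] [eb])).length :=
      length_le_mapWord g' hg'gm.2 _
    simp only [List.length_append]
    omega
  refine ⟨e', (Filter.tendsto_add_atTop_iff_nat 1).mp ?_⟩
  exact Filter.tendsto_atTop_mono (fun n => le_trans (hle n) (main n)) he
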